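/- arXiv:1702.06900 — 3 statements merged into one kernel-verified Lean document; each statement's English description precedes it below -/
import Mathlib

section
/- Consider a periodic schedule with pattern of duration T > 0 preceded by an initialization phase of duration c >= 0 and followed by a clean-up phase of duration c' >= 0, where the pattern executes l_k instances of application k and is repeated n times. Then the application efficiency rho_k(d_k) at completion time d_k = r_k + c + n*T + c' satisfies |rho_k(d_k) - l_k*w_k/T| <= ((c + c')*(l_k*w_k/T) + w_k) / (c + n*T + c'); in particular rho_k(d_k) tends to the periodic efficiency l_k*w_k/T as n tends to infinity. -/
open Filter

/-! Over the horizon `D = c + n T + c'` the efficiency differs from `l w / T` by exactly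
`(δ T - l (c + c')) w / (D T)`; since `0 ≤ δ ≤ 1` the numerator is at most `(l (c + c') + T) w`
in absolute value, which gives the bound, and the bound is `O(1 / n)`. -/

section Efficiency

variable {w T c c' x L δ : ℝ}

lemma abs_mul_sub_le_add (hδ : δ ∈ Set.Icc (0 : ℝ) 1) (hT : 0 ≤ T) (hL : 0 ≤ L) :
    |δ * T - L| ≤ L + T := by
  obtain ⟨hδ₀, hδ₁⟩ := hδ
  rw [abs_sub_le_iff]
  constructor <;> nlinarith [mul_nonneg hδ₀ hT]

lemma efficiency_sub_periodic (hT : T ≠ 0) (hD : c + x * T + c' ≠ 0) :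
    (x * L + δ) * w / (c + x * T + c') - L * w / T =
      (δ * T - L * (c + c')) * w / ((c + x * T + c') * T) := by
  rw [div_sub_div _ _ hD hT]
  ring

lemma abs_efficiency_sub_periodic_le (hw : 0 ≤ w) (hT : 0 < T) (hcc' : 0 ≤ c + c')
    (hL : 0 ≤ L) (hδ : δ ∈ Set.Icc (0 : ℝ) 1) (hD : 0 < c + x * T + c') :
    |(x * L + δ) * w / (c + x * T + c') - L * w / T| ≤
      ((c + c') * (L * w / T) + w) / (c + x * T + c') := by
  rw [efficiency_sub_periodic hT.ne' hD.ne', abs_div, abs_mul, abs_of_nonneg hw,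
    abs_of_pos (mul_pos hD hT)]
  calc |δ * T - L * (c + c')| * w / ((c + x * T + c') * T)
      ≤ (L * (c + c') + T) * w / ((c + x * T + c') * T) := by
        gcongr
        exact abs_mul_sub_le_add hδ hT.le (mul_nonneg hL hcc')
    _ = ((c + c') * (L * w / T) + w) / (c + x * T + c') := by
        field_simp

end Efficiency

/-- for a periodic schedule of pattern duration `T` repeated `n` times with
init phase `c` and clean-up phase `c'`, with `l` instances of the application per pattern
and `δ n ∈ {0,1}` extra instances, the efficiency
`ρ(d) = (n*l + δ n) * w / (d - r)` with `d = r + c + n*T + c'` satisfies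
`|ρ(d) - l*w/T| ≤ ((c + c') * (l*w/T) + w) / (c + n*T + c')`; in particular it tends to
the periodic efficiency `l*w/T` as `n → ∞`. -/
theorem stmt3 (w T c c' r : ℝ) (l : ℕ) (δ : ℕ → ℝ)
    (hw : 0 < w) (hT : 0 < T) (hc : 0 ≤ c) (hc' : 0 ≤ c')
    (hδ : ∀ n, δ n = 0 ∨ δ n = 1) :
    (∀ n : ℕ, 1 ≤ n →
      |((n : ℝ) * l + δ n) * w / ((r + c + n * T + c') - r) - (l : ℝ) * w / T| ≤
        ((c + c') * ((l : ℝ) * w / T) + w) / (c + n * T + c')) ∧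
    Tendsto (fun n : ℕ => ((n : ℝ) * l + δ n) * w / ((r + c + n * T + c') - r))
      atTop (nhds ((l : ℝ) * w / T)) := by
  have horizon : ∀ n : ℕ, (r + c + n * T + c') - r = c + n * T + c' := fun n => by ring
  have hbound : ∀ n : ℕ, 1 ≤ n →
      |((n : ℝ) * l + δ n) * w / ((r + c + n * T + c') - r) - (l : ℝ) * w / T| ≤
        ((c + c') * ((l : ℝ) * w / T) + w) / (c + n * T + c') := by
    intro n hn
    have hn' : (1 : ℝ) ≤ n := by exact_mod_cast hn
    rw [horizon]
    refine abs_efficiency_sub_periodic_le hw.le hT (add_nonneg hc hc') l.cast_nonneg ?_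
      (by nlinarith)
    rcases hδ n with h | h <;> simp [h]
  refine ⟨hbound, ?_⟩
  have horizon_tendsto : Tendsto (fun n : ℕ => c + n * T + c') atTop atTop :=
    tendsto_atTop_add_const_right _ _ <| tendsto_atTop_add_const_left _ _ <|
      tendsto_natCast_atTop_atTop.atTop_mul_const hT
  rw [tendsto_iff_norm_sub_tendsto_zero]
  refine squeeze_zero_norm' ?_
    ((tendsto_const_nhds (x := (c + c') * ((l : ℝ) * w / T) + w)).div_atTop horizon_tendsto)
  filter_upwards [eventually_ge_atTop 1] with n hn
  simpa only [Real.norm_eq_abs, abs_abs] using hbound n hn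
end

section
/- In a compact pattern, for each application k the intervals (sigma_k_i, sigmaIO_k_i) over which insertion of a new instance of application k could occur are pairwise disjoint and their union is contained in one period; hence the total number of events examined across all insertions of instances of application k by the insertion procedure is at most the total number of events in the pattern, 2 * sum_j l_j + 2. -/
open Set Function

theorem pairwise_disjoint_Ioo_of_le_of_le_succ {α : Type*} [Preorder α] {a b : ℕ → α}
    (hab : ∀ i, a i ≤ b i) (hba : ∀ i, b i ≤ a (i + 1)) :
    Pairwise (Disjoint on fun i => Ioo (a i) (b i)) :=
  (monotone_nat_of_le_succ fun i => (hab i).trans (hba i)).pairwise_disjoint_on_Ioo_succ.mono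
    fun i j h => h.mono (Ioo_subset_Ioo_right (hba i)) (Ioo_subset_Ioo_right (hba j))

theorem Finset.sum_card_filter_le_card {ι α : Type*} (E : Finset α) (s : Finset ι)
    {p : ι → α → Prop} [∀ i, DecidablePred (p i)]
    (hp : Pairwise (Disjoint on fun i => {x | p i x})) :
    ∑ i ∈ s, (E.filter (p i)).card ≤ E.card := by
  classical
  have hdisj : (s : Set ι).PairwiseDisjoint fun i => E.filter (p i) :=
    fun i _ j _ hij => Finset.disjoint_filter.2 fun _ _ hi hj => Set.disjoint_left.1 (hp hij) hi hj
  rw [← Finset.card_biUnion hdisj]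
  exact Finset.card_le_card (Finset.biUnion_subset.2 fun i _ => Finset.filter_subset _ _)

theorem stmt11_general (K : ℕ) (l : Fin K → ℕ) (w : Fin K → ℝ)
    (σ σIO : (k : Fin K) → ℕ → ℝ)
    (hord : ∀ k i, σ k i + w k ≤ σIO k i ∧ σIO k i ≤ σ k (i + 1))
    (hw : ∀ k, 0 ≤ w k)
    (E : Finset ℝ) (hE : E.card = 2 * (∑ j, l j) + 2) (k : Fin K) :
    (∀ i j : ℕ, i ≠ j →
      Disjoint (Set.Ioo (σIO k i) (σ k (i + 1))) (Set.Ioo (σIO k j) (σ k (j + 1)))) ∧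
    ∑ i ∈ Finset.range (l k),
        (E.filter (fun x => σIO k i < x ∧ x < σ k (i + 1))).card ≤
      2 * (∑ j, l j) + 2 := by
  have hgaps : Pairwise (Disjoint on fun i => Ioo (σIO k i) (σ k (i + 1))) :=
    pairwise_disjoint_Ioo_of_le_of_le_succ (fun i => (hord k i).2)
      fun i => (le_add_of_nonneg_right (hw k)).trans (hord k (i + 1)).1
  exact ⟨hgaps, hE ▸ E.sum_card_filter_le_card _ hgaps⟩

/-- in a compact pattern the instances of each application `k` are
sequential, so the open gaps `(σIO k i, σ k (i+1))` into which a new instance of `k`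
could be inserted are pairwise disjoint; hence the total number of events examined across
all insertions of instances of application `k` is at most the total number of events of
the pattern, `2 * ∑ j, l j + 2`. -/
theorem stmt11 (T : ℝ) (K : ℕ) (l : Fin K → ℕ) (w : Fin K → ℝ)
    (σ σIO : (k : Fin K) → ℕ → ℝ)
    (hord : ∀ k i, σ k i + w k ≤ σIO k i ∧ σIO k i ≤ σ k (i + 1))
    (hw : ∀ k, 0 ≤ w k)
    (E : Finset ℝ) (hE : E.card = 2 * (∑ j, l j) + 2) (k : Fin K) :
    (∀ i j : ℕ, i ≠ j →
      Disjoint (Set.Ioo (σIO k i) (σ k (i + 1))) (Set.Ioo (σIO k j) (σ k (j + 1)))) ∧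
    ∑ i ∈ Finset.range (l k),
        (E.filter (fun x => σIO k i < x ∧ x < σ k (i + 1))).card ≤
      2 * (∑ j, l j) + 2 :=
  stmt11_general K l w σ σIO hord hw E hE k
end

section
/- If in a compact pattern every gap between consecutive instances of every application either has zero length or has the total bandwidth saturated at B throughout, then no application is schedulable (assuming w_k > 0 and vol_k > 0 for all k). -/
/-!
A saturated gap leaves no spare bandwidth, so the integrand `min (p k * b) (B - load t)`
vanishes on it; on a gap of nonpositive length the integral of the nonnegative integrand is
`≤ 0`. Either way the schedulability integral is `≤ 0 < vol k`.
-/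

open MeasureTheory Set

theorem intervalIntegral.integral_nonpos_of_ge {μ : Measure ℝ} {f : ℝ → ℝ} {a b : ℝ}
    (hba : b ≤ a) (hf : ∀ u ∈ Icc b a, 0 ≤ f u) : ∫ u in a..b, f u ∂μ ≤ 0 := by
  rw [intervalIntegral.integral_symm, neg_nonpos]
  exact intervalIntegral.integral_nonneg hba hf

theorem integral_min_sub_nonpos_of_saturated_or_empty {cap B a c : ℝ} {load : ℝ → ℝ}
    (hcap : 0 ≤ cap) (hload : ∀ t, load t ≤ B)
    (hgap : c ≤ a ∨ ∀ t ∈ Icc a c, load t = B) :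
    ∫ t in a..c, min cap (B - load t) ≤ 0 := by
  rcases le_or_gt c a with hca | hac
  · exact intervalIntegral.integral_nonpos_of_ge hca fun t _ ↦ le_min hcap (sub_nonneg.2 (hload t))
  · have hsat := hgap.resolve_left hac.not_ge
    have hzero : EqOn (fun t ↦ min cap (B - load t)) (fun _ ↦ 0) (uIcc a c) := by
      intro t ht
      rw [uIcc_of_le hac.le] at ht
      simp only [hsat t ht, sub_self, min_eq_right hcap]
    rw [intervalIntegral.integral_congr hzero, intervalIntegral.integral_zero]

theorem stmt16_general (K : ℕ) (p w vol : Fin K → ℝ) (b B : ℝ) (l : Fin K → ℕ)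
    (σ σIO : (k : Fin K) → ℕ → ℝ) (load : ℝ → ℝ)
    (hb : 0 < b) (hp : ∀ k, 0 < p k)
    (hvol : ∀ k, 0 < vol k)
    (hload : ∀ t, load t ≤ B)
    (hcompact : ∀ k, ∀ i < l k, σIO k i - w k ≤ σ k i + w k ∨
      ∀ t ∈ Set.Icc (σ k i + w k) (σIO k i - w k), load t = B) :
    ∀ k, ¬ ∃ i < l k,
      vol k ≤ ∫ t in (σ k i + w k)..(σIO k i - w k), min (p k * b) (B - load t) := by
  rintro k ⟨i, hi, hschedulable⟩
  have hnonpos := integral_min_sub_nonpos_of_saturated_or_empty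
    (mul_pos (hp k) hb).le hload (hcompact k i hi)
  linarith [hvol k]

/-- if in a compact pattern every gap between consecutive instances of
every application either has zero (or negative) length or has the total bandwidth
saturated at `B` throughout, then no application is schedulable (the schedulability
integral of every instance is `0 < vol k`). -/
theorem stmt16 (K : ℕ) (p w vol : Fin K → ℝ) (b B : ℝ) (l : Fin K → ℕ)
    (σ σIO : (k : Fin K) → ℕ → ℝ) (load : ℝ → ℝ)
    (hb : 0 < b) (hB : 0 < B) (hp : ∀ k, 0 < p k) (hw : ∀ k, 0 < w k)
    (hvol : ∀ k, 0 < vol k)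
    (hload : ∀ t, load t ≤ B)
    (hcompact : ∀ k, ∀ i < l k, σIO k i - w k ≤ σ k i + w k ∨
      ∀ t ∈ Set.Icc (σ k i + w k) (σIO k i - w k), load t = B) :
    ∀ k, ¬ ∃ i < l k,
      vol k ≤ ∫ t in (σ k i + w k)..(σIO k i - w k), min (p k * b) (B - load t) :=
  stmt16_general K p w vol b B l σ σIO load hb hp hvol hload hcompact
end
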